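/- For any R-module M, the natural map from M to the direct product of all its finitely embedded quotient modules (indexed by the class of such quotients, which forms a set up to the natural identification) is a pure monomorphism. -/

import Mathlib

universe u

/-- A linear map is a pure monomorphism if it is injective and remains injective after
tensoring with every `R`-module. -/
def IsPureMono (R : Type u) [CommRing R] {M N : Type u} [AddCommGroup M] [Module R M]
    [AddCommGroup N] [Module R N] (f : M →ₗ[R] N) : Prop :=
  Function.Injective f ∧
    ∀ (L : Type u) [AddCommGroup L] [Module R L], Function.Injective (LinearMap.rTensor L f)

/-- A module `D` is pure injective if every homomorphism into `D` extends along every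
pure monomorphism. -/
def IsPureInjective (R : Type u) [CommRing R] (D : Type u) [AddCommGroup D] [Module R D] :
    Prop :=
  ∀ (M N : Type u) [AddCommGroup M] [Module R M] [AddCommGroup N] [Module R N]
    (f : M →ₗ[R] N), IsPureMono R f → ∀ g : M →ₗ[R] D, ∃ h : N →ₗ[R] D, h ∘ₗ f = g

/-- A module is finitely embedded if it embeds into the injective envelope of a direct sum
of finitely many simple modules, i.e. into an injective module which is an essential
extension of a finitely generated semisimple submodule. -/
def FinitelyEmbedded (R : Type u) [CommRing R] (M : Type u) [AddCommGroup M] [Module R M] :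
    Prop :=
  ∃ E : ModuleCat.{u} R, Module.Injective R E ∧
    ∃ S : Submodule R E, IsSemisimpleModule R S ∧ S.FG ∧
      (∀ P : Submodule R E, P ≠ ⊥ → S ⊓ P ≠ ⊥) ∧
      ∃ f : M →ₗ[R] E, Function.Injective f

/-- The natural map from `M` to the product of all its finitely embedded quotient modules. -/
noncomputable def toFinitelyEmbeddedQuotients (R : Type u) [CommRing R] (M : Type u)
    [AddCommGroup M] [Module R M] :
    M →ₗ[R] ∀ K : {K : Submodule R M // FinitelyEmbedded R (M ⧸ K)}, M ⧸ K.1 :=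
  LinearMap.pi fun K => K.1.mkQ

/-!
Every nonzero element `y` of a module is detected by a map into a finitely embedded module: the
injective hull of a simple quotient of `R ∙ y`, built as a maximal essential extension inside an
injective module. For finitely generated `L` and `t ≠ 0` in `M ⊗ L`, such a map `φ` on `M ⊗ L`
curries to `M → Hom(L, E)`, whose image embeds in a finite power of `E`. So `M ⧸ ker (curry φ)`
is one of the finitely embedded quotients, and `φ` factors through the natural map tensored with
`L`, which therefore does not kill `t`. Arbitrary `L` reduce to finitely generated ones because
`⊗` commutes with the direct limit of finitely generated submodules.
-/

universe v

namespace Submodule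

variable {R E F : Type*} [Ring R] [AddCommGroup E] [Module R E] [AddCommGroup F] [Module R F]

def IsEssentialIn (A W : Submodule R E) : Prop :=
  ∀ x ∈ W, x ≠ 0 → ∃ r : R, r • x ∈ A ∧ r • x ≠ 0

theorem isEssentialIn_self (A : Submodule R E) : A.IsEssentialIn A :=
  fun _ hx hx0 => ⟨1, by rwa [one_smul], by rwa [one_smul]⟩

theorem isEssentialIn_top_iff {A : Submodule R E} :
    A.IsEssentialIn ⊤ ↔ ∀ P : Submodule R E, P ≠ ⊥ → A ⊓ P ≠ ⊥ := by
  constructor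
  · intro hA P hP
    obtain ⟨x, hxP, hx⟩ := P.ne_bot_iff.mp hP
    obtain ⟨r, hrA, hr⟩ := hA x trivial hx
    exact (Submodule.ne_bot_iff _).mpr ⟨r • x, ⟨hrA, P.smul_mem r hxP⟩, hr⟩
  · intro hA x _ hx
    obtain ⟨z, ⟨hzA, hzx⟩, hz⟩ := (Submodule.ne_bot_iff _).mp (hA (R ∙ x) (by simpa using hx))
    obtain ⟨r, rfl⟩ := mem_span_singleton.mp hzx
    exact ⟨r, hzA, hz⟩

theorem IsEssentialIn.trans {A B W : Submodule R E} (hAB : A.IsEssentialIn B)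
    (hBW : B.IsEssentialIn W) : A.IsEssentialIn W := by
  intro x hx hx0
  obtain ⟨r, hrB, hr⟩ := hBW x hx hx0
  obtain ⟨s, hsA, hs⟩ := hAB _ hrB hr
  exact ⟨s * r, by rwa [mul_smul], by rwa [mul_smul]⟩

theorem IsEssentialIn.inf {A B W : Submodule R E} (hA : A.IsEssentialIn ⊤)
    (hB : B.IsEssentialIn W) : (A ⊓ B).IsEssentialIn W := by
  intro x hx hx0
  obtain ⟨r, hrB, hr⟩ := hB x hx hx0
  obtain ⟨s, hsA, hs⟩ := hA _ trivial hr
  exact ⟨s * r, by rw [mul_smul]; exact ⟨hsA, B.smul_mem s hrB⟩, by rwa [mul_smul]⟩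

theorem IsEssentialIn.map {A W : Submodule R E} (h : A.IsEssentialIn W) {f : E →ₗ[R] F}
    (hf : Function.Injective f) : (A.map f).IsEssentialIn (W.map f) := by
  rintro _ ⟨x, hx, rfl⟩ hx0
  obtain ⟨r, hrA, hr⟩ := h x hx fun h0 => hx0 (by rw [h0, map_zero])
  exact ⟨r, ⟨r • x, hrA, map_smul f r x⟩, by rwa [← map_smul, ne_eq, map_eq_zero_iff f hf]⟩

theorem IsEssentialIn.comap_subtype {A W : Submodule R E} (h : A.IsEssentialIn W) :
    (A.comap W.subtype).IsEssentialIn ⊤ := by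
  intro x _ hx
  obtain ⟨r, hrA, hr⟩ := h x x.2 fun h0 => hx (Subtype.ext h0)
  exact ⟨r, hrA, fun h0 => hr (congrArg Subtype.val h0)⟩

theorem isEssentialIn_sSup {A : Submodule R E} {c : Set (Submodule R E)} (hne : c.Nonempty)
    (hc : DirectedOn (· ≤ ·) c) (h : ∀ W ∈ c, A.IsEssentialIn W) : A.IsEssentialIn (sSup c) := by
  intro x hx
  obtain ⟨W, hW, hxW⟩ := (mem_sSup_of_directed hne hc).mp hx
  exact h W hW x hxW

theorem IsEssentialIn.injective_of_disjoint_ker {A : Submodule R E} (hA : A.IsEssentialIn ⊤)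
    {f : E →ₗ[R] F} (hf : Disjoint A (LinearMap.ker f)) : Function.Injective f := by
  rw [← LinearMap.ker_eq_bot]
  by_contra h
  exact isEssentialIn_top_iff.mp hA _ h hf.eq_bot

theorem IsEssentialIn.comap_proj {ι : Type*} {φ : ι → Type*} [∀ i, AddCommGroup (φ i)]
    [∀ i, Module R (φ i)] {i : ι} {A : Submodule R (φ i)} (hA : A.IsEssentialIn ⊤) :
    (A.comap (LinearMap.proj i : (∀ j, φ j) →ₗ[R] φ i)).IsEssentialIn ⊤ := by
  intro x _ hx
  by_cases hxi : x i = 0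
  · exact ⟨1, by simp [hxi], by rwa [one_smul]⟩
  · obtain ⟨r, hrA, hr⟩ := hA (x i) trivial hxi
    exact ⟨r, hrA, fun h0 => hr (congrFun h0 i)⟩

theorem isEssentialIn_pi {ι : Type*} [Finite ι] {φ : ι → Type*} [∀ i, AddCommGroup (φ i)]
    [∀ i, Module R (φ i)] {A : ∀ i, Submodule R (φ i)} (hA : ∀ i, (A i).IsEssentialIn ⊤) :
    (pi Set.univ A).IsEssentialIn ⊤ := by
  cases nonempty_fintype ι
  rw [← iInf_comap_proj, ← Finset.inf_univ_eq_iInf]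
  exact Finset.inf_induction (p := fun B : Submodule R (∀ i, φ i) => B.IsEssentialIn ⊤)
    (isEssentialIn_self ⊤) (fun _ hA₁ _ hA₂ => hA₁.inf hA₂) fun i _ => (hA i).comap_proj

theorem exists_maximal_isEssentialIn (A : Submodule R E) :
    ∃ W, A ≤ W ∧ Maximal A.IsEssentialIn W :=
  zorn_le_nonempty₀ {W | A.IsEssentialIn W}
    (fun c hc hchain W hW => ⟨sSup c, isEssentialIn_sSup ⟨W, hW⟩ hchain.directedOn hc,
      fun _ => le_sSup⟩) A A.isEssentialIn_self

theorem exists_maximal_disjoint (A : Submodule R E) : ∃ C, Maximal (Disjoint A) C :=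
  let ⟨C, _, hC⟩ := zorn_le_nonempty₀ {C | Disjoint A C}
    (fun c hc hchain _ _ => ⟨sSup c, hchain.directedOn.disjoint_sSup_right.mpr hc,
      fun _ => le_sSup⟩) ⊥ disjoint_bot_right
  ⟨C, hC⟩

theorem isEssentialIn_map_mkQ_of_maximal_disjoint {A C : Submodule R E}
    (hC : Maximal (Disjoint A) C) : (A.map C.mkQ).IsEssentialIn ⊤ := by
  intro y _ hy
  obtain ⟨d, rfl⟩ := C.mkQ_surjective y
  have hdC : d ∉ C := fun h => hy ((Quotient.mk_eq_zero C).mpr h)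
  have hmeet : A ⊓ (C ⊔ R ∙ d) ≠ ⊥ := fun hdisj => hdC <|
    hC.2 (disjoint_iff.mpr hdisj) le_sup_left (mem_sup_right (mem_span_singleton_self d))
  obtain ⟨z, ⟨hzA, hz⟩, hz0⟩ := (Submodule.ne_bot_iff _).mp hmeet
  obtain ⟨c, hc, _, hrd, rfl⟩ := mem_sup.mp hz
  obtain ⟨r, rfl⟩ := mem_span_singleton.mp hrd
  have hmk : C.mkQ (c + r • d) = r • C.mkQ d := by
    simp [(Quotient.mk_eq_zero C).mpr hc]
  refine ⟨r, ⟨c + r • d, hzA, hmk⟩, fun h0 => hz0 ?_⟩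
  rw [← hmk, mkQ_apply, Quotient.mk_eq_zero] at h0
  exact disjoint_def.mp hC.1 _ hzA h0

end Submodule

open Submodule

theorem Module.Injective.of_leftInverse {R : Type*} [Ring R] {I Q : Type v} [AddCommGroup I]
    [Module R I] [AddCommGroup Q] [Module R Q] [Module.Injective R I] (s : Q →ₗ[R] I)
    (r : I →ₗ[R] Q) (h : Function.LeftInverse r s) : Module.Injective R Q :=
  ⟨fun _ _ _ _ _ _ f hf g => by
    obtain ⟨g', hg'⟩ := Module.Injective.out f hf (s ∘ₗ g)
    exact ⟨r ∘ₗ g', fun x => by rw [LinearMap.comp_apply, hg', LinearMap.comp_apply, h]⟩⟩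

theorem Submodule.injective_of_maximal_isEssentialIn {R : Type*} [Ring R] {E : Type*}
    [AddCommGroup E] [Module R E] [Module.Injective R E] {A W : Submodule R E}
    (hW : Maximal A.IsEssentialIn W) : Module.Injective R W := by
  obtain ⟨C, hC⟩ := exists_maximal_disjoint W
  have hρ : Function.Injective (C.mkQ ∘ₗ W.subtype) := by
    refine (injective_iff_map_eq_zero _).mpr fun w hw => Subtype.ext ?_
    exact disjoint_def.mp hC.1 _ w.2 ((Quotient.mk_eq_zero C).mp hw)
  obtain ⟨ψ, hψ⟩ := Module.Injective.out _ hρ W.subtype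
  have hψ_inj : Function.Injective ψ := by
    refine (isEssentialIn_map_mkQ_of_maximal_disjoint hC).injective_of_disjoint_ker
      (disjoint_def.mpr ?_)
    rintro _ ⟨w, hw, rfl⟩ hψw
    have : w = 0 := (hψ ⟨w, hw⟩).symm.trans hψw
    simp [this]
  have hW_map : (W.map C.mkQ).map ψ = W := by
    rw [← Submodule.map_comp]
    ext x
    exact ⟨fun ⟨w, hw, hx⟩ => hx ▸ (hψ ⟨w, hw⟩).symm ▸ hw, fun hx => ⟨x, hx, hψ ⟨x, hx⟩⟩⟩
  -- `range ψ ≅ E ⧸ C` is an essential extension of `W`, so it is `W` by maximality;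
  -- hence `ψ ∘ mkQ` retracts `E` onto `W`.
  have hrange : LinearMap.range ψ ≤ W := by
    have hess := (isEssentialIn_map_mkQ_of_maximal_disjoint hC).map hψ_inj
    rw [hW_map, map_top] at hess
    exact hW.2 (hW.1.trans hess) (hW_map ▸ LinearMap.map_le_range)
  exact Module.Injective.of_leftInverse W.subtype
    ((ψ ∘ₗ C.mkQ).codRestrict W fun x => hrange ⟨_, rfl⟩) fun w => Subtype.ext (hψ w)

theorem Module.exists_embedding_into_injective {R : Type u} [Ring R] (A : Type v) [Small.{v} R]
    [AddCommGroup A] [Module R A] :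
    ∃ (I : Type v) (_ : AddCommGroup I) (_ : Module R I) (j : A →ₗ[R] I),
      Module.Injective R I ∧ Function.Injective j := by
  let I := CategoryTheory.Injective.under (ModuleCat.of R A)
  have : CategoryTheory.Injective (ModuleCat.of R I) :=
    inferInstanceAs (CategoryTheory.Injective I)
  exact ⟨I, inferInstance, inferInstance, (CategoryTheory.Injective.ι (ModuleCat.of R A)).hom,
    Module.injective_module_of_injective_object R I,
    (ModuleCat.mono_iff_injective _).mp inferInstance⟩

theorem Module.exists_injective_isEssentialIn_range {R : Type u} [Ring R] (A : Type v)
    [Small.{v} R] [AddCommGroup A] [Module R A] :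
    ∃ (E : Type v) (_ : AddCommGroup E) (_ : Module R E) (i : A →ₗ[R] E),
      Module.Injective R E ∧ Function.Injective i ∧ (LinearMap.range i).IsEssentialIn ⊤ := by
  obtain ⟨I, _, _, j, hI, hj⟩ := Module.exists_embedding_into_injective (R := R) A
  obtain ⟨W, hjW, hW⟩ := exists_maximal_isEssentialIn (LinearMap.range j)
  refine ⟨W, _, _, j.codRestrict W fun a => hjW ⟨a, rfl⟩, injective_of_maximal_isEssentialIn hW,
    fun a b h => hj (congrArg Subtype.val h), ?_⟩
  rw [LinearMap.range_codRestrict]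
  exact hW.1.comap_subtype

section FinitelyEmbedded

variable {R : Type u} [CommRing R] {N N' : Type u} [AddCommGroup N] [Module R N]
  [AddCommGroup N'] [Module R N']

theorem FinitelyEmbedded.of_injective (h : FinitelyEmbedded R N) {g : N' →ₗ[R] N}
    (hg : Function.Injective g) : FinitelyEmbedded R N' :=
  let ⟨E, hE, S, hS, hfg, hess, f, hf⟩ := h
  ⟨E, hE, S, hS, hfg, hess, f ∘ₗ g, hf.comp hg⟩

theorem FinitelyEmbedded.pi (h : FinitelyEmbedded R N) (ι : Type) [Finite ι] :
    FinitelyEmbedded R (ι → N) := by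
  obtain ⟨E, hE, S, hS, hfg, hess, f, hf⟩ := h
  have : Module.Finite R S := Module.Finite.iff_fg.mpr hfg
  have hrange : LinearMap.range (S.subtype.compLeft ι) = Submodule.pi Set.univ fun _ => S := by
    ext x
    exact ⟨fun ⟨y, hy⟩ i _ => hy ▸ (y i).2, fun hx => ⟨fun i => ⟨x i, hx i trivial⟩, rfl⟩⟩
  refine ⟨ModuleCat.of R (ι → E), inferInstance, LinearMap.range (S.subtype.compLeft ι),
    IsSemisimpleModule.range _, fg_range _, ?_, f.compLeft ι, hf.comp_left⟩
  rw [← isEssentialIn_top_iff, hrange]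
  exact isEssentialIn_pi fun _ => isEssentialIn_top_iff.mpr hess

theorem finitelyEmbedded_of_isEssentialIn [Module.Injective R N] (S : Submodule R N)
    [IsSemisimpleModule R S] [Module.Finite R S] (hS : S.IsEssentialIn ⊤) :
    FinitelyEmbedded R N :=
  ⟨ModuleCat.of R N, ‹_›, S, ‹_›, Module.Finite.iff_fg.mp ‹_›, isEssentialIn_top_iff.mp hS,
    LinearMap.id, Function.injective_id⟩

theorem exists_finitelyEmbedded_apply_ne_zero {y : N} (hy : y ≠ 0) :
    ∃ (E : Type u) (_ : AddCommGroup E) (_ : Module R E),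
      FinitelyEmbedded R E ∧ ∃ φ : N →ₗ[R] E, φ y ≠ 0 := by
  let y₀ : R ∙ y := ⟨y, mem_span_singleton_self y⟩
  have : Nontrivial (R ∙ y) := ⟨⟨y₀, 0, fun h => hy (congrArg Subtype.val h)⟩⟩
  obtain ⟨K, hK, -⟩ := (eq_top_or_exists_le_coatom (⊥ : Submodule R (R ∙ y))).resolve_left
    bot_ne_top
  have hspan : R ∙ y₀ = ⊤ := (span_singleton_eq_top_iff R y₀).mpr fun z =>
    let ⟨r, hr⟩ := mem_span_singleton.mp z.2
    ⟨r, Subtype.ext hr⟩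
  have hy₀ : y₀ ∉ K := fun h =>
    hK.1 (top_le_iff.mp (hspan ▸ (span_singleton_le_iff_mem y₀ K).mpr h))
  have : IsSimpleModule R ((R ∙ y) ⧸ K) := isSimpleModule_iff_isCoatom.mpr hK
  obtain ⟨E, _, _, i, hE, hi, hiE⟩ :=
    Module.exists_injective_isEssentialIn_range (R := R) ((R ∙ y) ⧸ K)
  have : IsSimpleModule R (LinearMap.range i) := .congr (LinearEquiv.ofInjective i hi).symm
  obtain ⟨φ, hφ⟩ := hE.out (R ∙ y).subtype (injective_subtype _) (i ∘ₗ K.mkQ)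
  refine ⟨E, _, _, finitelyEmbedded_of_isEssentialIn _ hiE, φ, ?_⟩
  rw [show y = (R ∙ y).subtype y₀ from rfl, hφ, LinearMap.comp_apply, ne_eq,
    map_eq_zero_iff i hi, mkQ_apply, Quotient.mk_eq_zero]
  exact hy₀

end FinitelyEmbedded

theorem LinearMap.lTensor_injective_of_forall_fg {R M N L : Type*} [CommSemiring R]
    [AddCommMonoid M] [Module R M] [AddCommMonoid N] [Module R N] [AddCommMonoid L] [Module R L]
    (f : M →ₗ[R] N) (h : ∀ L' : Submodule R L, L'.FG → Function.Injective (f.lTensor L')) :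
    Function.Injective (f.lTensor L) := by
  intro x y hxy
  obtain ⟨J, hJ, sub⟩ := Submodule.exists_fg_le_subset_range_rTensor_subtype {x, y} (by simp)
  obtain ⟨x, rfl⟩ := sub (.inl rfl)
  obtain ⟨y, rfl⟩ := sub (.inr rfl)
  simp_rw [← comp_apply, lTensor_comp_rTensor, ← rTensor_comp_lTensor, comp_apply] at hxy
  obtain ⟨J', hJ', hle, heq⟩ := hJ.exists_rTensor_fg_inclusion_eq hxy
  simp_rw [← comp_apply, rTensor_comp_lTensor, ← lTensor_comp_rTensor, comp_apply] at heq
  rw [show J.subtype = J'.subtype ∘ₗ J.inclusion hle from rfl, rTensor_comp_apply,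
    rTensor_comp_apply, h J' hJ' heq]

theorem LinearMap.rTensor_injective_of_forall_fg {R M N L : Type*} [CommSemiring R]
    [AddCommMonoid M] [Module R M] [AddCommMonoid N] [Module R N] [AddCommMonoid L] [Module R L]
    (f : M →ₗ[R] N) (h : ∀ L' : Submodule R L, L'.FG → Function.Injective (f.rTensor L')) :
    Function.Injective (f.rTensor L) := by
  simp_rw [← lTensor_inj_iff_rTensor_inj] at h ⊢
  exact f.lTensor_injective_of_forall_fg h

section Purity

variable {R : Type u} [CommRing R] {M : Type u} [AddCommGroup M] [Module R M]

theorem FinitelyEmbedded.quotient_ker {E L : Type u} [AddCommGroup E] [Module R E]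
    [AddCommGroup L] [Module R L] [Module.Finite R L] (hE : FinitelyEmbedded R E)
    (ψ : M →ₗ[R] L →ₗ[R] E) : FinitelyEmbedded R (M ⧸ LinearMap.ker ψ) := by
  obtain ⟨n, v, hv⟩ := Module.Finite.exists_fin (R := R) (M := L)
  let ev : (L →ₗ[R] E) →ₗ[R] Fin n → E := LinearMap.pi fun i => LinearMap.applyₗ (v i)
  have hev : Function.Injective ev := fun g g' h => LinearMap.ext_on_range hv (congrFun h)
  exact (hE.pi (Fin n)).of_injective (g := ev ∘ₗ (LinearMap.ker ψ).liftQ ψ le_rfl)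
    (hev.comp (LinearMap.ker_eq_bot.mp (ker_liftQ_eq_bot _ _ _ le_rfl)))

theorem rTensor_toFinitelyEmbeddedQuotients_injective (L : Type u) [AddCommGroup L]
    [Module R L] [Module.Finite R L] :
    Function.Injective ((toFinitelyEmbeddedQuotients R M).rTensor L) := by
  refine (injective_iff_map_eq_zero _).mpr fun t ht => by_contra fun ht0 => ?_
  obtain ⟨E, _, _, hE, φ, hφ⟩ := exists_finitelyEmbedded_apply_ne_zero (R := R) ht0
  let K : {K : Submodule R M // FinitelyEmbedded R (M ⧸ K)} :=
    ⟨_, hE.quotient_ker (TensorProduct.curry φ)⟩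
  have hfactor : TensorProduct.lift ((K.1.liftQ (TensorProduct.curry φ) le_rfl) ∘ₗ
      LinearMap.proj K) ∘ₗ (toFinitelyEmbeddedQuotients R M).rTensor L = φ :=
    TensorProduct.ext' fun _ _ => rfl
  exact hφ (by rw [← hfactor, LinearMap.comp_apply, ht, map_zero])

end Purity

theorem toFinitelyEmbeddedQuotients_pure (R : Type u) [CommRing R] (M : Type u)
    [AddCommGroup M] [Module R M] :
    IsPureMono R (toFinitelyEmbeddedQuotients R M) := by
  set f := toFinitelyEmbeddedQuotients R M
  have hf : ⇑f = TensorProduct.rid R _ ∘ f.rTensor R ∘ (TensorProduct.rid R M).symm := by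
    ext m
    simp
  refine ⟨?_, fun L _ _ => f.rTensor_injective_of_forall_fg fun L' hL' => ?_⟩
  · rw [hf]
    exact (TensorProduct.rid R _).injective.comp <|
      (rTensor_toFinitelyEmbeddedQuotients_injective R).comp (TensorProduct.rid R M).symm.injective
  · have : Module.Finite R L' := Module.Finite.iff_fg.mpr hL'
    exact rTensor_toFinitelyEmbeddedQuotients_injective L'
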